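/- arXiv:2005.11015 — 2 statements merged into one kernel-verified Lean document; each statement's English description precedes it below -/
import Mathlib

section
/- Convergence of inexact least-squares iterates (Lemma 3.2 of the paper): under the contractive-solver assumption and the nested-iteration updates, the final iterates converge to the limit of the exact Galerkin solutions: ‖u_∞ − u_{ℓ, n̄(ℓ)}‖_V → 0 as ℓ → ∞, where u_∞ ∈ V_∞ is the least-squares solution in V_∞, the closure of the union of the subspaces V_ℓ. In particular, also |||u⋆_ℓ − u_{ℓ, n̄(ℓ)}||| → 0 as ℓ → ∞. -/
open scoped RealInnerProductSpace
open Filter Topology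

private lemma contraction_null {e b : ℕ → ℝ} {q : ℝ} (hq0 : 0 ≤ q) (hq1 : q < 1)
    (he : ∀ n, 0 ≤ e n) (hb0 : ∀ n, 0 ≤ b n)
    (hb : Tendsto b atTop (𝓝 0))
    (hrec : ∀ n, e (n + 1) ≤ q * e n + b n) : Tendsto e atTop (𝓝 0) := by
  rw [Metric.tendsto_atTop]
  intro ε hε
  have hqpos : 0 < 1 - q := by linarith
  obtain ⟨M, hM⟩ := Metric.tendsto_atTop.mp hb ((1 - q) * ε / 2) (by positivity)
  have key : ∀ k, e (M + k) ≤ q ^ k * e M + ε / 2 := by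
    intro k
    induction k with
    | zero => simp; linarith
    | succ k ih =>
      have hbMk : b (M + k) ≤ (1 - q) * ε / 2 := by
        have h := hM (M + k) (Nat.le_add_right _ _)
        rw [Real.dist_eq, sub_zero, abs_of_nonneg (hb0 _)] at h
        linarith
      have h2 : q * e (M + k) ≤ q * (q ^ k * e M + ε / 2) :=
        mul_le_mul_of_nonneg_left ih hq0
      calc e (M + (k + 1)) = e ((M + k) + 1) := by ring_nf
        _ ≤ q * e (M + k) + b (M + k) := hrec _
        _ ≤ q * (q ^ k * e M + ε / 2) + (1 - q) * ε / 2 := by linarith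
        _ ≤ q ^ (k + 1) * e M + ε / 2 := by ring_nf; nlinarith [he M]
  have hpow : Tendsto (fun k => q ^ k * e M) atTop (𝓝 0) := by
    simpa using (tendsto_pow_atTop_nhds_zero_of_lt_one hq0 hq1 |>.mul_const (e M))
  obtain ⟨K, hK⟩ := (Metric.tendsto_atTop.mp hpow) (ε / 2) (by positivity)
  refine ⟨M + K, fun n hn => ?_⟩
  have hn' : M + (n - M) = n := by omega
  have h1 := key (n - M)
  rw [hn'] at h1
  have hKn : q ^ (n - M) * e M < ε / 2 := by
    have h := hK (n - M) (by omega)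
    rw [Real.dist_eq, sub_zero] at h
    calc q ^ (n - M) * e M ≤ |q ^ (n - M) * e M| := le_abs_self _
      _ < ε / 2 := h
  rw [Real.dist_eq, sub_zero, abs_of_nonneg (he n)]
  linarith

/-- Lemma 3.2 of the paper: convergence of the inexact least-squares
iterates obtained by nested iteration with a contractive solver towards the limit of the
exact Galerkin solutions; in particular, the solver error tends to zero. -/
theorem lsfem_inexact_iterates_convergence
    {V H : Type*} [NormedAddCommGroup V] [InnerProductSpace ℝ V] [CompleteSpace V]
    [NormedAddCommGroup H] [InnerProductSpace ℝ H] [CompleteSpace H]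
    (L : V →L[ℝ] H) (c C : ℝ) (hc : 0 < c) (hC : 0 < C)
    (hlow : ∀ v : V, c⁻¹ * ‖v‖ ≤ ‖L v‖) (hup : ∀ v : V, ‖L v‖ ≤ C * ‖v‖)
    (F : H) (ustarV : V) (hustarV : L ustarV = F)
    -- nested sequence of closed discrete spaces with exact least-squares solutions
    (Vl : ℕ → Submodule ℝ V) (hclosed : ∀ ℓ, IsClosed (Vl ℓ : Set V))
    (hmono : ∀ ℓ, Vl ℓ ≤ Vl (ℓ + 1))
    (ustar : ℕ → V) (hustar : ∀ ℓ, ustar ℓ ∈ Vl ℓ)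
    (hgal : ∀ ℓ, ∀ v ∈ Vl ℓ, (⟪L (ustar ℓ), L v⟫ : ℝ) = ⟪F, L v⟫)
    -- least-squares solution in the closure of the union of the discrete spaces
    (uinf : V) (huinf : uinf ∈ closure (⋃ ℓ, (Vl ℓ : Set V)))
    (hgalinf : ∀ v ∈ closure (⋃ ℓ, (Vl ℓ : Set V)), (⟪L uinf, L v⟫ : ℝ) = ⟪F, L v⟫)
    -- `N` is a norm on `V` equivalent to `‖·‖`
    (N : V → ℝ) (C₁ C₂ : ℝ) (hC₁ : 0 < C₁) (hC₂ : 0 < C₂)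
    (hNlow : ∀ v : V, C₁ * ‖v‖ ≤ N v) (hNup : ∀ v : V, N v ≤ C₂ * ‖v‖)
    (hNadd : ∀ x y : V, N (x + y) ≤ N x + N y)
    (hNsmul : ∀ (r : ℝ) (x : V), N (r • x) = |r| * N x)
    -- contractive iterative solver
    (q : ℝ) (hq0 : 0 < q) (hq1 : q < 1)
    (Φ : ℕ → V → V) (hΦmem : ∀ ℓ, ∀ v ∈ Vl ℓ, Φ ℓ v ∈ Vl ℓ)
    (hctr : ∀ ℓ, ∀ v ∈ Vl ℓ, N (ustar ℓ - Φ ℓ v) ≤ q * N (ustar ℓ - v))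
    -- nested-iteration updates
    (nbar : ℕ → ℕ) (hnbar : ∀ ℓ, 1 ≤ nbar ℓ)
    (u : ℕ → ℕ → V) (h00 : u 0 0 ∈ Vl 0)
    (hstep : ∀ ℓ n, n < nbar ℓ → u ℓ (n + 1) = Φ ℓ (u ℓ n))
    (hnest : ∀ ℓ, u (ℓ + 1) 0 = u ℓ (nbar ℓ)) :
    Tendsto (fun ℓ => ‖uinf - u ℓ (nbar ℓ)‖) atTop (𝓝 0) ∧
    Tendsto (fun ℓ => N (ustar ℓ - u ℓ (nbar ℓ))) atTop (𝓝 0) := by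
  have hmono' : Monotone Vl := monotone_nat_of_le_succ hmono
  have hsub : ∀ ℓ, (Vl ℓ : Set V) ⊆ closure (⋃ ℓ, (Vl ℓ : Set V)) :=
    fun ℓ => (Set.subset_iUnion (fun ℓ => (Vl ℓ : Set V)) ℓ).trans subset_closure
  have hlow' : ∀ v : V, ‖v‖ ≤ c * ‖L v‖ := by
    intro v
    have h := hlow v
    calc ‖v‖ = c * (c⁻¹ * ‖v‖) := by field_simp
      _ ≤ c * ‖L v‖ := mul_le_mul_of_nonneg_left h hc.le
  -- Galerkin orthogonality
  have horth : ∀ ℓ, ∀ v ∈ Vl ℓ, (⟪L (uinf - ustar ℓ), L v⟫ : ℝ) = 0 := by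
    intro ℓ v hv
    rw [map_sub, inner_sub_left, hgal ℓ v hv, hgalinf v (hsub ℓ hv)]
    ring
  -- best approximation
  have hbest : ∀ ℓ, ∀ v ∈ Vl ℓ, ‖L (uinf - ustar ℓ)‖ ≤ ‖L (uinf - v)‖ := by
    intro ℓ v hv
    have hdecomp : uinf - v = (uinf - ustar ℓ) + (ustar ℓ - v) := by abel
    have hmem : ustar ℓ - v ∈ Vl ℓ := sub_mem (hustar ℓ) hv
    have h0 : (⟪L (uinf - ustar ℓ), L (ustar ℓ - v)⟫ : ℝ) = 0 := horth ℓ _ hmem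
    have hsq : ‖L (uinf - v)‖^2 = ‖L (uinf - ustar ℓ)‖^2 + ‖L (ustar ℓ - v)‖^2 := by
      rw [hdecomp, map_add, norm_add_sq_real, h0]; ring
    nlinarith [norm_nonneg (L (uinf - v)), norm_nonneg (L (uinf - ustar ℓ)),
      norm_nonneg (L (ustar ℓ - v))]
  -- convergence of the exact Galerkin solutions
  have hδ : Tendsto (fun ℓ => ‖uinf - ustar ℓ‖) atTop (𝓝 0) := by
    rw [Metric.tendsto_atTop]
    intro ε hε
    have hcC : 0 < c * C := mul_pos hc hC
    obtain ⟨v, hvU, hvclose⟩ : ∃ v ∈ ⋃ ℓ, (Vl ℓ : Set V), ‖uinf - v‖ < ε / (c * C) := by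
      obtain ⟨v, hv1, hv2⟩ := Metric.mem_closure_iff.mp huinf (ε / (c * C)) (by positivity)
      exact ⟨v, hv1, by rwa [dist_eq_norm] at hv2⟩
    obtain ⟨ℓ0, hℓ0⟩ := Set.mem_iUnion.mp hvU
    refine ⟨ℓ0, fun ℓ hℓ => ?_⟩
    have hvℓ : v ∈ Vl ℓ := hmono' hℓ hℓ0
    have h1 : ‖uinf - ustar ℓ‖ ≤ c * ‖L (uinf - ustar ℓ)‖ := hlow' _
    have h2 : ‖L (uinf - ustar ℓ)‖ ≤ ‖L (uinf - v)‖ := hbest ℓ v hvℓ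
    have h3 : ‖L (uinf - v)‖ ≤ C * ‖uinf - v‖ := hup _
    rw [Real.dist_eq, sub_zero, abs_of_nonneg (norm_nonneg _)]
    have h4 : ‖uinf - ustar ℓ‖ ≤ c * C * ‖uinf - v‖ := by nlinarith
    calc ‖uinf - ustar ℓ‖ ≤ c * C * ‖uinf - v‖ := h4
      _ < c * C * (ε / (c * C)) := by nlinarith
      _ = ε := by field_simp
  -- membership of the iterates
  have umem : ∀ ℓ, ∀ n, n ≤ nbar ℓ → u ℓ n ∈ Vl ℓ := by
    intro ℓ
    induction ℓ with
    | zero =>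
      intro n hn
      induction n with
      | zero => exact h00
      | succ k ih =>
        rw [hstep 0 k (by omega)]
        exact hΦmem 0 _ (ih (by omega))
    | succ m ihm =>
      intro n hn
      induction n with
      | zero =>
        rw [hnest m]
        exact hmono m (ihm (nbar m) le_rfl)
      | succ k ih =>
        rw [hstep (m + 1) k (by omega)]
        exact hΦmem _ _ (ih (by omega))
  have hNnonneg : ∀ v : V, 0 ≤ N v :=
    fun v => le_trans (mul_nonneg hC₁.le (norm_nonneg v)) (hNlow v)
  have hNneg : ∀ x : V, N (-x) = N x := by
    intro x
    rw [← neg_one_smul ℝ x, hNsmul]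
    simp
  -- contraction along the inner iteration
  have hiter : ∀ ℓ n, n ≤ nbar ℓ → N (ustar ℓ - u ℓ n) ≤ q ^ n * N (ustar ℓ - u ℓ 0) := by
    intro ℓ n
    induction n with
    | zero => intro _; simp
    | succ k ih =>
      intro hn
      rw [hstep ℓ k (by omega)]
      calc N (ustar ℓ - Φ ℓ (u ℓ k)) ≤ q * N (ustar ℓ - u ℓ k) :=
            hctr ℓ _ (umem ℓ k (by omega))
        _ ≤ q * (q ^ k * N (ustar ℓ - u ℓ 0)) :=
            mul_le_mul_of_nonneg_left (ih (by omega)) hq0.le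
        _ = q ^ (k + 1) * N (ustar ℓ - u ℓ 0) := by ring
  set e : ℕ → ℝ := fun ℓ => N (ustar ℓ - u ℓ (nbar ℓ)) with he
  set d : ℕ → ℝ := fun ℓ => N (uinf - ustar ℓ) with hd
  have hestep : ∀ ℓ, e ℓ ≤ q * N (ustar ℓ - u ℓ 0) := by
    intro ℓ
    have h1 := hiter ℓ (nbar ℓ) le_rfl
    have h2 : q ^ nbar ℓ ≤ q ^ 1 := pow_le_pow_of_le_one hq0.le hq1.le (hnbar ℓ)
    have h3 : q ^ nbar ℓ * N (ustar ℓ - u ℓ 0) ≤ q ^ 1 * N (ustar ℓ - u ℓ 0) :=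
      mul_le_mul_of_nonneg_right h2 (hNnonneg _)
    simpa using h1.trans h3
  have hrec : ∀ ℓ, e (ℓ + 1) ≤ q * e ℓ + q * (d ℓ + d (ℓ + 1)) := by
    intro ℓ
    have h1 := hestep (ℓ + 1)
    rw [hnest ℓ] at h1
    have hdec : ustar (ℓ + 1) - u ℓ (nbar ℓ) =
        (ustar (ℓ + 1) - uinf) + ((uinf - ustar ℓ) + (ustar ℓ - u ℓ (nbar ℓ))) := by abel
    have h2 : N (ustar (ℓ + 1) - u ℓ (nbar ℓ)) ≤ d (ℓ + 1) + (d ℓ + e ℓ) := by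
      rw [hdec]
      have hn1 : N (ustar (ℓ + 1) - uinf) = d (ℓ + 1) := by
        rw [show ustar (ℓ + 1) - uinf = -(uinf - ustar (ℓ + 1)) by abel, hNneg]
      calc N ((ustar (ℓ + 1) - uinf) + ((uinf - ustar ℓ) + (ustar ℓ - u ℓ (nbar ℓ))))
          ≤ N (ustar (ℓ + 1) - uinf) + N ((uinf - ustar ℓ) + (ustar ℓ - u ℓ (nbar ℓ))) :=
            hNadd _ _
        _ ≤ N (ustar (ℓ + 1) - uinf) + (N (uinf - ustar ℓ) + N (ustar ℓ - u ℓ (nbar ℓ))) := by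
            linarith [hNadd (uinf - ustar ℓ) (ustar ℓ - u ℓ (nbar ℓ))]
        _ = d (ℓ + 1) + (d ℓ + e ℓ) := by rw [hn1]
    have h3 : q * N (ustar (ℓ + 1) - u ℓ (nbar ℓ)) ≤ q * (d (ℓ + 1) + (d ℓ + e ℓ)) :=
      mul_le_mul_of_nonneg_left h2 hq0.le
    calc e (ℓ + 1) ≤ q * N (ustar (ℓ + 1) - u ℓ (nbar ℓ)) := h1
      _ ≤ q * (d (ℓ + 1) + (d ℓ + e ℓ)) := h3
      _ = q * e ℓ + q * (d ℓ + d (ℓ + 1)) := by ring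
  -- d → 0
  have hdten : Tendsto d atTop (𝓝 0) := by
    have hupper : ∀ ℓ, d ℓ ≤ C₂ * ‖uinf - ustar ℓ‖ := fun ℓ => hNup _
    have hC2δ : Tendsto (fun ℓ => C₂ * ‖uinf - ustar ℓ‖) atTop (𝓝 0) := by
      simpa using hδ.const_mul C₂
    exact squeeze_zero (fun ℓ => hNnonneg _) hupper hC2δ
  have hb : Tendsto (fun ℓ => q * (d ℓ + d (ℓ + 1))) atTop (𝓝 0) := by
    have hshift : Tendsto (fun ℓ => d (ℓ + 1)) atTop (𝓝 0) :=
      hdten.comp (tendsto_add_atTop_nat 1)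
    have := (hdten.add hshift).const_mul q
    simpa using this
  have heten : Tendsto e atTop (𝓝 0) :=
    contraction_null hq0.le hq1 (fun ℓ => hNnonneg _)
      (fun ℓ => mul_nonneg hq0.le (add_nonneg (hNnonneg _) (hNnonneg _))) hb hrec
  refine ⟨?_, heten⟩
  have hnorm : ∀ ℓ, ‖uinf - u ℓ (nbar ℓ)‖ ≤ ‖uinf - ustar ℓ‖ + C₁⁻¹ * e ℓ := by
    intro ℓ
    have h1 : ‖uinf - u ℓ (nbar ℓ)‖ ≤ ‖uinf - ustar ℓ‖ + ‖ustar ℓ - u ℓ (nbar ℓ)‖ := by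
      calc ‖uinf - u ℓ (nbar ℓ)‖ = ‖(uinf - ustar ℓ) + (ustar ℓ - u ℓ (nbar ℓ))‖ := by abel_nf
        _ ≤ _ := norm_add_le _ _
    have h2 : ‖ustar ℓ - u ℓ (nbar ℓ)‖ ≤ C₁⁻¹ * e ℓ := by
      have hthis : C₁ * ‖ustar ℓ - u ℓ (nbar ℓ)‖ ≤ e ℓ := hNlow (ustar ℓ - u ℓ (nbar ℓ))
      calc ‖ustar ℓ - u ℓ (nbar ℓ)‖ = C₁⁻¹ * (C₁ * ‖ustar ℓ - u ℓ (nbar ℓ)‖) := by field_simp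
        _ ≤ C₁⁻¹ * e ℓ := mul_le_mul_of_nonneg_left hthis (by positivity)
    linarith
  have hub : Tendsto (fun ℓ => ‖uinf - ustar ℓ‖ + C₁⁻¹ * e ℓ) atTop (𝓝 0) := by
    have := hδ.add (heten.const_mul C₁⁻¹)
    simpa using this
  exact squeeze_zero (fun ℓ => norm_nonneg _) hnorm hub
end

section
/- Core identity in the proof of discrete reliability: let W₁ ⊆ W₂ be closed linear subspaces of V and let u₁ ∈ W₁ and u₂ ∈ W₂ be the corresponding least-squares solutions. Then for every w ∈ W₁ it holds that ‖L(u₂ − u₁)‖_H² = ⟪F − L u₁, L(u₂ − w)⟫_H; consequently, c⁻²·‖u₂ − u₁‖_V² ≤ ‖F − L u₁‖_H · ‖L(u₂ − w)‖_H ≤ C·‖F − L u₁‖_H · ‖u₂ − w‖_V for every w ∈ W₁. -/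
open scoped RealInnerProductSpace

/-- core identity in the proof of discrete reliability: for nested closed
subspaces `W₁ ⊆ W₂` with least-squares solutions `u₁` and `u₂`, and any `w ∈ W₁`,
`‖L(u₂ − u₁)‖² = ⟪F − L u₁, L(u₂ − w)⟫`, with the ensuing estimates. -/
theorem lsfem_discrete_reliability_core_identity
    {V H : Type*} [NormedAddCommGroup V] [InnerProductSpace ℝ V] [CompleteSpace V]
    [NormedAddCommGroup H] [InnerProductSpace ℝ H] [CompleteSpace H]
    (L : V →L[ℝ] H) (c C : ℝ) (hc : 0 < c) (hC : 0 < C)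
    (hlow : ∀ v : V, c⁻¹ * ‖v‖ ≤ ‖L v‖) (hup : ∀ v : V, ‖L v‖ ≤ C * ‖v‖)
    (F : H) (ustar : V) (hustar : L ustar = F)
    (W₁ W₂ : Submodule ℝ V) (hW₁ : IsClosed (W₁ : Set V)) (hW₂ : IsClosed (W₂ : Set V))
    (hle : W₁ ≤ W₂)
    (u₁ : V) (hu₁ : u₁ ∈ W₁) (hgal₁ : ∀ w ∈ W₁, (⟪L u₁, L w⟫ : ℝ) = ⟪F, L w⟫)
    (u₂ : V) (hu₂ : u₂ ∈ W₂) (hgal₂ : ∀ w ∈ W₂, (⟪L u₂, L w⟫ : ℝ) = ⟪F, L w⟫) :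
    ∀ w ∈ W₁,
      ‖L (u₂ - u₁)‖ ^ 2 = ⟪F - L u₁, L (u₂ - w)⟫ ∧
      c⁻¹ ^ 2 * ‖u₂ - u₁‖ ^ 2 ≤ ‖F - L u₁‖ * ‖L (u₂ - w)‖ ∧
      ‖F - L u₁‖ * ‖L (u₂ - w)‖ ≤ C * ‖F - L u₁‖ * ‖u₂ - w‖ := by
  intro w hw
  have key : ‖L (u₂ - u₁)‖ ^ 2 = ⟪F - L u₁, L (u₂ - w)⟫ := by
    have h1 : (⟪F - L u₁, L (u₂ - u₁)⟫ : ℝ) = ‖L (u₂ - u₁)‖ ^ 2 := by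
      have hmem : u₂ - u₁ ∈ W₂ := Submodule.sub_mem _ hu₂ (hle hu₁)
      have := hgal₂ _ hmem
      rw [inner_sub_left, ← this, ← inner_sub_left, ← map_sub,
        real_inner_self_eq_norm_sq]
    have h2 : (⟪F - L u₁, L (u₁ - w)⟫ : ℝ) = 0 := by
      have hmem : u₁ - w ∈ W₁ := Submodule.sub_mem _ hu₁ hw
      have := hgal₁ _ hmem
      rw [inner_sub_left, this, sub_self]
    have : u₂ - w = (u₂ - u₁) + (u₁ - w) := by abel
    rw [this, map_add, inner_add_right, h1, h2, add_zero]
  refine ⟨key, ?_, ?_⟩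
  · calc c⁻¹ ^ 2 * ‖u₂ - u₁‖ ^ 2 = (c⁻¹ * ‖u₂ - u₁‖) ^ 2 := by ring
      _ ≤ ‖L (u₂ - u₁)‖ ^ 2 := by
          apply pow_le_pow_left₀ (by positivity) (hlow _)
      _ = ⟪F - L u₁, L (u₂ - w)⟫ := key
      _ ≤ ‖F - L u₁‖ * ‖L (u₂ - w)‖ := real_inner_le_norm _ _
  · have := hup (u₂ - w)
    nlinarith [norm_nonneg (F - L u₁)]
end
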